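/- arXiv:1608.07842 — 5 statements merged into one kernel-verified Lean document; each statement's English description precedes it below -/
import Mathlib

section
/- Let q, z ∈ ℂ with 0 < |q| < 1, z ≠ 0, and z ≠ q^k for every integer k. Then the series defining the inverted odd-order universal mock theta function, g₃(z⁻¹, q⁻¹) = ∑_{n=1}^∞ (q⁻¹)^{n(n-1)} / ((z⁻¹; q⁻¹)_n (z q⁻¹; q⁻¹)_n), converges and equals ∑_{n=1}^∞ q^n / ((z;q)_n (z⁻¹q;q)_n). -/
/-- The finite q-Pochhammer symbol `(z;q)_n = ∏_{i=0}^{n-1} (1 - z q^i)`. -/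
noncomputable def qPoch (z q : ℂ) (n : ℕ) : ℂ := ∏ i ∈ Finset.range n, (1 - z * q ^ i)

/-!
Inverting a single factor gives `(1 - a⁻¹ q⁻ⁱ) qⁱ = -a⁻¹ (1 - a qⁱ)`, so
`(a⁻¹;q⁻¹)_n q^(n choose 2) = (-a⁻¹)ⁿ (a;q)_n`. Applied to `a = z` and `a = z⁻¹q` this turns the
`n`-th term of `g₃(z⁻¹,q⁻¹)` into `qⁿ / ((z;q)_n (z⁻¹q;q)_n)`. For `|q| < 1` and no vanishing
factor, `(a;q)_n` tends to the nonzero infinite product `(a;q)_∞`, so `1 / (a;q)_n` is bounded and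
the new series is dominated by a geometric one.
-/

open Filter Topology

lemma summable_norm_mul_pow (a : ℂ) {q : ℂ} (hq : ‖q‖ < 1) : Summable fun i => ‖a * q ^ i‖ := by
  simpa [norm_mul, norm_pow] using (summable_geometric_of_lt_one (norm_nonneg q) hq).mul_left ‖a‖

namespace qPoch

lemma succ (a q : ℂ) (n : ℕ) : qPoch a q (n + 1) = qPoch a q n * (1 - a * q ^ n) :=
  Finset.prod_range_succ _ n

lemma inv_inv_mul_pow_choose {a q : ℂ} (ha : a ≠ 0) (hq : q ≠ 0) (n : ℕ) :
    qPoch a⁻¹ q⁻¹ n * q ^ n.choose 2 = (-a⁻¹) ^ n * qPoch a q n := by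
  induction n with
  | zero => simp [qPoch]
  | succ n ih =>
    have hfactor : (1 - a⁻¹ * q⁻¹ ^ n) * q ^ n = -a⁻¹ * (1 - a * q ^ n) := by
      rw [inv_pow]
      field_simp
      ring
    rw [succ, succ, Nat.choose_succ_succ', Nat.choose_one_right, pow_add]
    linear_combination (1 - a⁻¹ * q⁻¹ ^ n) * q ^ n * ih + (-a⁻¹) ^ n * qPoch a q n * hfactor

lemma tendsto_tprod {a q : ℂ} (hq : ‖q‖ < 1) :
    Tendsto (qPoch a q) atTop (𝓝 (∏' i, (1 - a * q ^ i))) := by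
  have hsum : Summable fun i => ‖-(a * q ^ i)‖ := by simpa using summable_norm_mul_pow a hq
  change Tendsto (fun n => ∏ i ∈ Finset.range n, (1 - a * q ^ i)) _ _
  simpa only [sub_eq_add_neg] using
    (multipliable_one_add_of_summable hsum).hasProd.tendsto_prod_nat

lemma tprod_ne_zero {a q : ℂ} (hq : ‖q‖ < 1) (h : ∀ i, 1 - a * q ^ i ≠ 0) :
    ∏' i, (1 - a * q ^ i) ≠ 0 := by
  have hsum : Summable fun i => ‖-(a * q ^ i)‖ := by simpa using summable_norm_mul_pow a hq
  simp_rw [sub_eq_add_neg] at h ⊢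
  exact tprod_one_add_ne_zero_of_summable h hsum

lemma exists_norm_inv_le {a q : ℂ} (hq : ‖q‖ < 1) (h : ∀ i, 1 - a * q ^ i ≠ 0) :
    ∃ C, ∀ n, ‖(qPoch a q n)⁻¹‖ ≤ C := by
  have hinv := (tendsto_tprod hq).inv₀ (tprod_ne_zero hq h)
  obtain ⟨C, hC⟩ := isBounded_iff_forall_norm_le.1 (Metric.isBounded_range_of_tendsto _ hinv)
  exact ⟨C, fun n => hC _ ⟨n, rfl⟩⟩

end qPoch

lemma summable_pow_div_qPoch_mul_qPoch {a b q : ℂ} (hq : ‖q‖ < 1)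
    (ha : ∀ i, 1 - a * q ^ i ≠ 0) (hb : ∀ i, 1 - b * q ^ i ≠ 0) :
    Summable fun n => q ^ n / (qPoch a q n * qPoch b q n) := by
  obtain ⟨A, hA⟩ := qPoch.exists_norm_inv_le hq ha
  obtain ⟨B, hB⟩ := qPoch.exists_norm_inv_le hq hb
  refine Summable.of_norm_bounded
    ((summable_geometric_of_lt_one (norm_nonneg q) hq).mul_right (A * B)) fun n => ?_
  rw [div_eq_mul_inv, mul_inv, norm_mul, norm_mul, norm_pow]
  exact mul_le_mul_of_nonneg_left
    (mul_le_mul (hA n) (hB n) (norm_nonneg _) ((norm_nonneg _).trans (hA 0))) (by positivity)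

lemma inv_pow_div_qPoch_inv_mul_qPoch_inv {q z : ℂ} (hq : q ≠ 0) (hz : z ≠ 0) (n : ℕ) :
    q⁻¹ ^ (2 * n.choose 2) / (qPoch z⁻¹ q⁻¹ n * qPoch (z * q⁻¹) q⁻¹ n)
      = q ^ n / (qPoch z q n * qPoch (z⁻¹ * q) q n) := by
  have h₁ := qPoch.inv_inv_mul_pow_choose hz hq n
  have h₂ := qPoch.inv_inv_mul_pow_choose (a := z⁻¹ * q) (by simp [hz, hq]) hq n
  rw [mul_inv, inv_inv] at h₂
  rw [← eq_div_iff (pow_ne_zero _ hq)] at h₁ h₂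
  have hden : qPoch z⁻¹ q⁻¹ n * qPoch (z * q⁻¹) q⁻¹ n
      = q⁻¹ ^ (2 * n.choose 2) * (q⁻¹ ^ n * (qPoch z q n * qPoch (z⁻¹ * q) q n)) := by
    have hunit : -z⁻¹ * -(z * q⁻¹) = q⁻¹ := by field_simp
    rw [h₁, h₂, div_mul_div_comm, mul_mul_mul_comm, ← mul_pow, hunit]
    ring
  rw [hden, div_mul_cancel_left₀ (pow_ne_zero _ (inv_ne_zero hq)), mul_inv, inv_pow, inv_inv,
    div_eq_mul_inv]

/-- For `0 < |q| < 1`, `z ≠ 0`, `z ≠ q^k` for all integers `k`, the series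
defining the inverted odd-order universal mock theta function
`g₃(z⁻¹,q⁻¹) = ∑_{n=1}^∞ (q⁻¹)^{n(n-1)} / ((z⁻¹;q⁻¹)_n (z q⁻¹;q⁻¹)_n)` converges and
equals `∑_{n=1}^∞ q^n / ((z;q)_n (z⁻¹q;q)_n)`. -/
theorem inverted_g3_eq (q z : ℂ)
    (hq0 : 0 < ‖q‖) (hq1 : ‖q‖ < 1)
    (hz0 : z ≠ 0) (hzq : ∀ k : ℤ, z ≠ q ^ k) :
    Summable (fun n : ℕ =>
      (q⁻¹) ^ ((n + 1) * n) / (qPoch z⁻¹ q⁻¹ (n + 1) * qPoch (z * q⁻¹) q⁻¹ (n + 1))) ∧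
    (∑' n : ℕ,
        (q⁻¹) ^ ((n + 1) * n) / (qPoch z⁻¹ q⁻¹ (n + 1) * qPoch (z * q⁻¹) q⁻¹ (n + 1)))
      = ∑' n : ℕ, q ^ (n + 1) / (qPoch z q (n + 1) * qPoch (z⁻¹ * q) q (n + 1)) := by
  have hq : q ≠ 0 := norm_pos_iff.1 hq0
  have hfactor₁ : ∀ i : ℕ, 1 - z * q ^ i ≠ 0 := fun i h => hzq (-i) <| by
    rw [zpow_neg, zpow_natCast]
    exact eq_inv_of_mul_eq_one_left (sub_eq_zero.1 h).symm
  have hfactor₂ : ∀ i : ℕ, 1 - z⁻¹ * q * q ^ i ≠ 0 := fun i h => hzq (i + 1) <| by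
    rw [← Nat.cast_succ, zpow_natCast, pow_succ', ← inv_mul_eq_one₀ hz0, ← mul_assoc]
    exact (sub_eq_zero.1 h).symm
  have hterm : ∀ n : ℕ,
      q⁻¹ ^ ((n + 1) * n) / (qPoch z⁻¹ q⁻¹ (n + 1) * qPoch (z * q⁻¹) q⁻¹ (n + 1))
        = q ^ (n + 1) / (qPoch z q (n + 1) * qPoch (z⁻¹ * q) q (n + 1)) := fun n => by
    rw [← inv_pow_div_qPoch_inv_mul_qPoch_inv hq hz0, Nat.choose_two_right, Nat.add_sub_cancel,
      Nat.two_mul_div_two_of_even (mul_comm n (n + 1) ▸ Nat.even_mul_succ_self n)]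
  simp only [hterm, and_true]
  exact (summable_nat_add_iff 1).2 (summable_pow_div_qPoch_mul_qPoch hq1 hfactor₁ hfactor₂)
end

section
/- Let q, z ∈ ℂ with 0 < |q| < 1 < |z| and z ≠ q^k for every integer k. Then the series ∑_{k=1}^∞ Ũ_k(z,q) z^{-k} q^k converges and g₃(z⁻¹, q⁻¹) = (z/(1-z)) · ∑_{k=1}^∞ Ũ_k(z,q) z^{-k} q^k, where g₃(z⁻¹,q⁻¹) denotes the convergent series ∑_{n=1}^∞ q^n / ((z;q)_n (z⁻¹q;q)_n). -/
private lemma qPoch_denoms_ne (q z : ℂ) (hz0 : z ≠ 0)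
    (hzq : ∀ k : ℤ, z ≠ q ^ k) :
    (∀ m : ℕ, 1 - z * q ^ m ≠ 0) ∧ (∀ m : ℕ, 1 - z⁻¹ * q ^ m ≠ 0) := by
  constructor <;> intro m h
  · apply hzq (-(m : ℤ))
    have h1 : z * q ^ m = 1 := by linear_combination -h
    rw [zpow_neg, zpow_natCast]
    exact eq_inv_of_mul_eq_one_left h1
  · apply hzq (m : ℤ)
    have h1 : z⁻¹ * q ^ m = 1 := by linear_combination -h
    rw [zpow_natCast]
    field_simp at h1
    exact h1.symm

private lemma one_sub_sum_le_prod_one_sub (s : Finset ℕ) (x : ℕ → ℝ)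
    (h0 : ∀ i ∈ s, 0 ≤ x i) (h1 : ∀ i ∈ s, x i ≤ 1) :
    1 - ∑ i ∈ s, x i ≤ ∏ i ∈ s, (1 - x i) := by
  classical
  induction s using Finset.cons_induction with
  | empty => simp
  | cons a s ha ih =>
    rw [Finset.prod_cons, Finset.sum_cons]
    have hs0 : ∀ i ∈ s, 0 ≤ x i := fun i hi => h0 i (Finset.mem_cons_of_mem hi)
    have hs1 : ∀ i ∈ s, x i ≤ 1 := fun i hi => h1 i (Finset.mem_cons_of_mem hi)
    have hp := ih hs0 hs1
    have hsn : 0 ≤ ∑ i ∈ s, x i := Finset.sum_nonneg hs0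
    have hxa0 := h0 a (Finset.mem_cons_self a s)
    have hxa1 := h1 a (Finset.mem_cons_self a s)
    nlinarith [mul_le_mul_of_nonneg_left hp (by linarith : (0:ℝ) ≤ 1 - x a)]

private lemma qPoch_abs_lower (q z : ℂ) (hq0 : 0 < ‖q‖) (hq1 : ‖q‖ < 1)
    (hz : 1 < ‖z‖) (hzq : ∀ k : ℤ, z ≠ q ^ k) :
    ∃ c : ℝ, 0 < c ∧ ∀ n : ℕ,
      c ≤ ‖qPoch (z * q) q n * qPoch (z⁻¹ * q) q n‖ := by
  classical
  have hz0 : z ≠ 0 := by intro h; rw [h] at hz; norm_num at hz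
  have hq : q ≠ 0 := by intro h; rw [h] at hq0; simp at hq0
  obtain ⟨ne1, ne2⟩ := qPoch_denoms_ne q z hz0 hzq
  set r : ℝ := ‖q‖ with hr
  set A : ℝ := ‖z * q‖ with hA
  set B : ℝ := ‖z⁻¹ * q‖ with hB
  have hr0 : 0 < r := hq0
  have hr1 : r < 1 := hq1
  have hA0 : 0 ≤ A := norm_nonneg _
  have hB0 : 0 ≤ B := norm_nonneg _
  set t : ℕ → ℝ := fun i => ‖1 - z * q * q ^ i‖ * ‖1 - z⁻¹ * q * q ^ i‖
    with ht_def
  set F : ℕ → ℝ := fun n => ‖qPoch (z * q) q n * qPoch (z⁻¹ * q) q n‖ with hF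
  have hFeq : ∀ n, F n = ∏ i ∈ Finset.range n, t i := by
    intro n
    simp only [hF, qPoch, norm_mul, norm_prod, ht_def, ← Finset.prod_mul_distrib]
  have hfac1 : ∀ i : ℕ, (1 : ℂ) - z * q * q ^ i ≠ 0 := by
    intro i
    have e : (1 : ℂ) - z * q * q ^ i = 1 - z * q ^ (i + 1) := by rw [pow_succ]; ring
    rw [e]; exact ne1 (i + 1)
  have hfac2 : ∀ i : ℕ, (1 : ℂ) - z⁻¹ * q * q ^ i ≠ 0 := by
    intro i
    have e : (1 : ℂ) - z⁻¹ * q * q ^ i = 1 - z⁻¹ * q ^ (i + 1) := by rw [pow_succ]; ring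
    rw [e]; exact ne2 (i + 1)
  have htpos : ∀ i, 0 < t i := fun i =>
    mul_pos (norm_pos_iff.mpr (hfac1 i)) (norm_pos_iff.mpr (hfac2 i))
  have hFpos : ∀ n, 0 < F n := by
    intro n
    rw [hFeq]
    exact Finset.prod_pos fun i _ => htpos i
  have habs : ∀ w : ℂ, 1 - ‖w‖ ≤ ‖1 - w‖ := by
    intro w
    simpa using norm_sub_norm_le (1 : ℂ) w
  -- lower bound for t i when (A+B) r^i ≤ 1
  have ht_low : ∀ i : ℕ, (A + B) * r ^ i ≤ 1 → 1 - (A + B) * r ^ i ≤ t i := by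
    intro i hi
    have e1 : ‖z * q * q ^ i‖ = A * r ^ i := by rw [norm_mul, norm_pow]
    have e2 : ‖z⁻¹ * q * q ^ i‖ = B * r ^ i := by rw [norm_mul, norm_pow]
    have h1 : 1 - A * r ^ i ≤ ‖1 - z * q * q ^ i‖ := by
      have := habs (z * q * q ^ i); rwa [e1] at this
    have h2 : 1 - B * r ^ i ≤ ‖1 - z⁻¹ * q * q ^ i‖ := by
      have := habs (z⁻¹ * q * q ^ i); rwa [e2] at this
    have hri : 0 ≤ r ^ i := pow_nonneg hr0.le i
    have hAr : 0 ≤ A * r ^ i := mul_nonneg hA0 hri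
    have hBr : 0 ≤ B * r ^ i := mul_nonneg hB0 hri
    have hB1 : 1 - B * r ^ i ≤ 1 := by linarith
    have hB1' : 0 ≤ 1 - B * r ^ i := by nlinarith
    have hA1' : 0 ≤ 1 - A * r ^ i := by nlinarith
    have := mul_le_mul h1 h2 hB1' (norm_nonneg _)
    simp only [ht_def]
    nlinarith
  -- choose N
  have hεpos : (0:ℝ) < (1 - r) / (2 * (A + B) + 1) :=
    div_pos (by linarith) (by positivity)
  obtain ⟨N, hN⟩ := exists_pow_lt_of_lt_one hεpos hr1
  have hNkey : (A + B) * r ^ N * (1 - r)⁻¹ ≤ 1 / 2 := by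
    have h1 : 0 < 1 - r := by linarith
    have h2 : r ^ N * (2 * (A + B) + 1) < 1 - r := by
      rw [lt_div_iff₀ (by positivity : (0:ℝ) < 2 * (A + B) + 1)] at hN
      linarith
    rw [mul_inv_le_iff₀ h1]
    nlinarith [pow_nonneg hr0.le N]
  have hsum : ∀ n : ℕ, ∑ i ∈ Finset.Ico N n, (A + B) * r ^ i ≤ 1 / 2 := by
    intro n
    have h1 : ∑ i ∈ Finset.Ico N n, r ^ i ≤ r ^ N * (1 - r)⁻¹ := by
      rw [Finset.sum_Ico_eq_sum_range]
      simp_rw [pow_add]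
      rw [← Finset.mul_sum]
      have h2 : ∑ j ∈ Finset.range (n - N), r ^ j ≤ (1 - r)⁻¹ := by
        rw [← tsum_geometric_of_lt_one hr0.le hr1]
        exact Summable.sum_le_tsum _ (fun i _ => pow_nonneg hr0.le i)
          (summable_geometric_of_lt_one hr0.le hr1)
      exact mul_le_mul_of_nonneg_left h2 (pow_nonneg hr0.le N)
    rw [← Finset.mul_sum]
    calc (A + B) * ∑ i ∈ Finset.Ico N n, r ^ i ≤ (A + B) * (r ^ N * (1 - r)⁻¹) :=
          mul_le_mul_of_nonneg_left h1 (by positivity)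
      _ ≤ 1 / 2 := by rw [← mul_assoc]; exact hNkey
  have hsmall : ∀ i : ℕ, N ≤ i → (A + B) * r ^ i ≤ 1 := by
    intro i hi
    have hmem : i ∈ Finset.Ico N (i + 1) := Finset.mem_Ico.mpr ⟨hi, Nat.lt_succ_self i⟩
    have h3 : (A + B) * r ^ i ≤ ∑ x ∈ Finset.Ico N (i + 1), (A + B) * r ^ x :=
      Finset.single_le_sum (f := fun j => (A + B) * r ^ j) (fun j _ => by positivity) hmem
    linarith [hsum (i + 1)]
  -- for n ≥ N : F n ≥ F N / 2
  have hFtail : ∀ n : ℕ, N ≤ n → F N * (1 / 2) ≤ F n := by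
    intro n hn
    have hsplit : F n = F N * ∏ i ∈ Finset.Ico N n, t i := by
      rw [hFeq, hFeq, ← Finset.prod_range_mul_prod_Ico t hn]
    rw [hsplit]
    have hmemN : ∀ i ∈ Finset.Ico N n, N ≤ i := fun i hi => (Finset.mem_Ico.mp hi).1
    have hp1 : ∏ i ∈ Finset.Ico N n, (1 - (A + B) * r ^ i) ≤ ∏ i ∈ Finset.Ico N n, t i :=
      Finset.prod_le_prod (fun i hi => by linarith [hsmall i (hmemN i hi)])
        (fun i hi => ht_low i (hsmall i (hmemN i hi)))
    have hp2 : 1 - ∑ i ∈ Finset.Ico N n, (A + B) * r ^ i ≤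
        ∏ i ∈ Finset.Ico N n, (1 - (A + B) * r ^ i) :=
      one_sub_sum_le_prod_one_sub _ _ (fun i _ => by positivity)
        (fun i hi => by linarith [hsmall i (hmemN i hi)])
    have : (1 : ℝ) / 2 ≤ ∏ i ∈ Finset.Ico N n, t i := by
      have := hsum n; linarith
    exact mul_le_mul_of_nonneg_left this (hFpos N).le
  -- minimum over the initial segment
  set S : Finset ℝ := (Finset.range (N + 1)).image F with hS
  have hSne : S.Nonempty := ⟨F 0, Finset.mem_image_of_mem F (Finset.mem_range.mpr (by omega))⟩
  set c₁ : ℝ := S.min' hSne with hc₁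
  have hc₁pos : 0 < c₁ := by
    obtain ⟨m, _, hm⟩ := Finset.mem_image.mp (S.min'_mem hSne)
    rw [hc₁, ← hm]
    exact hFpos m
  have hc₁le : ∀ n, n ≤ N → c₁ ≤ F n := fun n hn =>
    S.min'_le _ (Finset.mem_image_of_mem F (Finset.mem_range.mpr (by omega)))
  refine ⟨c₁ / 2, by positivity, fun n => ?_⟩
  rcases le_or_gt n N with h | h
  · have := hc₁le n h; show c₁ / 2 ≤ F n; linarith
  · have h1 := hFtail n h.le
    have h2 := hc₁le N le_rfl
    show c₁ / 2 ≤ F n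
    nlinarith [(hFpos N).le]

/-- The rank generating function `Ũ_k(z,q) = ∑_{n=0}^∞ q^{kn} / ((zq;q)_n (z⁻¹q;q)_n)`
for unimodal sequences with a k-fold peak. -/
noncomputable def tildeU (k : ℕ) (z q : ℂ) : ℂ :=
  ∑' n : ℕ, q ^ (k * n) / (qPoch (z * q) q n * qPoch (z⁻¹ * q) q n)

/-- For `0 < |q| < 1 < |z|` and `z ≠ q^k` for all integers `k`, the series
`∑_{k=1}^∞ Ũ_k(z,q) z^{-k} q^k` converges and
`g₃(z⁻¹,q⁻¹) = (z/(1-z)) · ∑_{k=1}^∞ Ũ_k(z,q) z^{-k} q^k`, where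
`g₃(z⁻¹,q⁻¹) = ∑_{n=1}^∞ q^n / ((z;q)_n (z⁻¹q;q)_n)`. -/
theorem g3_eq_sum_tildeU (q z : ℂ)
    (hq0 : 0 < ‖q‖) (hq1 : ‖q‖ < 1) (hz : 1 < ‖z‖)
    (hzq : ∀ k : ℤ, z ≠ q ^ k) :
    Summable (fun k : ℕ => tildeU (k + 1) z q * z⁻¹ ^ (k + 1) * q ^ (k + 1)) ∧
    (∑' n : ℕ, q ^ (n + 1) / (qPoch z q (n + 1) * qPoch (z⁻¹ * q) q (n + 1)))
      = (z / (1 - z)) * ∑' k : ℕ, tildeU (k + 1) z q * z⁻¹ ^ (k + 1) * q ^ (k + 1) := by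
  classical
  have hz0 : z ≠ 0 := by intro h; rw [h] at hz; norm_num at hz
  have hq : q ≠ 0 := by intro h; rw [h] at hq0; norm_num at hq0
  obtain ⟨ne1, ne2⟩ := qPoch_denoms_ne q z hz0 hzq
  obtain ⟨c, hc0, hc⟩ := qPoch_abs_lower q z hq0 hq1 hz hzq
  set r : ℝ := ‖q‖ with hr
  set P : ℕ → ℂ := fun n => qPoch (z * q) q n * qPoch (z⁻¹ * q) q n with hP
  -- the doubly-indexed family
  set g : ℕ → ℕ → ℂ := fun k n => (q ^ (n + 1) * z⁻¹) ^ (k + 1) / P n with hg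
  set f : ℕ × ℕ → ℂ := Function.uncurry g with hf
  -- norm bound
  have hbound : ∀ p : ℕ × ℕ, ‖f p‖ ≤ c⁻¹ * (r ^ p.1 * r ^ (p.2 + 1)) := by
    rintro ⟨k, n⟩
    have hPn := hc n
    have hPpos : 0 < ‖P n‖ := lt_of_lt_of_le hc0 hPn
    have h1 : ‖f (k, n)‖ = (‖q ^ (n + 1) * z⁻¹‖) ^ (k + 1) / ‖P n‖ := by
      simp [hf, hg, Function.uncurry, norm_div, norm_pow]
    have h2 : ‖q ^ (n + 1) * z⁻¹‖ ≤ r ^ (n + 1) := by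
      rw [norm_mul, norm_pow, norm_inv]
      have hz1 : (‖z‖)⁻¹ ≤ 1 := by
        rw [inv_le_one_iff₀]; right; exact hz.le
      calc r ^ (n + 1) * (‖z‖)⁻¹ ≤ r ^ (n + 1) * 1 :=
            mul_le_mul_of_nonneg_left hz1 (by positivity)
        _ = r ^ (n + 1) := mul_one _
    have h3 : (‖q ^ (n + 1) * z⁻¹‖) ^ (k + 1) ≤ r ^ ((n + 1) * (k + 1)) := by
      rw [pow_mul]
      exact pow_le_pow_left₀ (norm_nonneg _) h2 (k + 1)
    have h4 : r ^ ((n + 1) * (k + 1)) ≤ r ^ (k + (n + 1)) :=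
      pow_le_pow_of_le_one hq0.le hq1.le (by nlinarith)
    have h5 : c⁻¹ * (r ^ k * r ^ (n + 1)) = r ^ (k + (n + 1)) / c := by
      rw [pow_add]; ring
    rw [h1, h5]
    exact div_le_div₀ (by positivity) (h3.trans h4) hc0 hPn
  -- summability of the norm bound
  have hgeo : Summable fun k : ℕ => r ^ k := summable_geometric_of_lt_one hq0.le hq1
  have hgeo' : Summable fun n : ℕ => r ^ (n + 1) := by
    simpa [pow_succ'] using hgeo.mul_left r
  have hgsum : Summable fun p : ℕ × ℕ => c⁻¹ * (r ^ p.1 * r ^ (p.2 + 1)) :=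
    (Summable.mul_of_nonneg hgeo hgeo' (fun k => by positivity)
      (fun n => by positivity)).mul_left c⁻¹
  have hfnorm : Summable fun p : ℕ × ℕ => ‖f p‖ :=
    Summable.of_nonneg_of_le (fun p => norm_nonneg _) hbound hgsum
  have hfsum : Summable f := hfnorm.of_norm
  -- tildeU terms are the row sums
  have hrow : ∀ k : ℕ, tildeU (k + 1) z q * z⁻¹ ^ (k + 1) * q ^ (k + 1) = ∑' n, g k n := by
    intro k
    rw [tildeU, ← tsum_mul_right, ← tsum_mul_right]
    apply tsum_congr
    intro n
    have e1 : (q ^ (n + 1) * z⁻¹) ^ (k + 1) = q ^ ((k + 1) * n) * q ^ (k + 1) * z⁻¹ ^ (k + 1) := by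
      rw [mul_pow, ← pow_mul, show (n + 1) * (k + 1) = (k + 1) * n + (k + 1) by ring, pow_add]
    show q ^ ((k + 1) * n) / P n * z⁻¹ ^ (k + 1) * q ^ (k + 1) = (q ^ (n + 1) * z⁻¹) ^ (k + 1) / P n
    rw [e1]
    ring
  -- summability of rows
  have hsummable : Summable (fun k : ℕ => tildeU (k + 1) z q * z⁻¹ ^ (k + 1) * q ^ (k + 1)) := by
    refine hfsum.prod.congr fun k => ?_
    exact (hrow k).symm
  refine ⟨hsummable, ?_⟩
  -- swap the order of summation
  have hswap : (∑' k : ℕ, tildeU (k + 1) z q * z⁻¹ ^ (k + 1) * q ^ (k + 1))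
      = ∑' n : ℕ, ∑' k : ℕ, g k n := by
    rw [tsum_congr hrow]
    exact (Summable.tsum_comm hfsum).symm
  rw [hswap]
  -- geometric summation of columns
  have hw : ∀ n : ℕ, ‖q ^ (n + 1) * z⁻¹‖ < 1 := by
    intro n
    rw [norm_mul, norm_pow, norm_inv]
    have h1 : r ^ (n + 1) < 1 := pow_lt_one₀ hq0.le hq1 (Nat.succ_ne_zero n)
    have h2 : (‖z‖)⁻¹ < 1 := by
      rw [inv_lt_one_iff₀]; right; exact hz
    have h3 : 0 < (‖z‖)⁻¹ := by positivity
    have h4 : 0 < r ^ (n + 1) := by positivity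
    nlinarith
  have hcol : ∀ n : ℕ, ∑' k : ℕ, g k n
      = q ^ (n + 1) * z⁻¹ / (1 - q ^ (n + 1) * z⁻¹) / P n := by
    intro n
    have hwn : ‖q ^ (n + 1) * z⁻¹‖ < 1 := by exact hw n
    have e1 : (fun k : ℕ => g k n)
        = fun k : ℕ => (q ^ (n + 1) * z⁻¹) ^ (k + 1) * (P n)⁻¹ := by
      funext k; simp [hg, div_eq_mul_inv]
    rw [e1, tsum_mul_right]
    congr 1
    have e2 : (fun k : ℕ => (q ^ (n + 1) * z⁻¹) ^ (k + 1))
        = fun k : ℕ => (q ^ (n + 1) * z⁻¹) * (q ^ (n + 1) * z⁻¹) ^ k := by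
      funext k; rw [pow_succ']
    rw [e2, tsum_mul_left, tsum_geometric_of_norm_lt_one hwn, div_eq_mul_inv]
  rw [tsum_congr hcol, ← tsum_mul_left]
  -- termwise identity with the g₃ series
  apply tsum_congr
  intro n
  have hsplit1 : qPoch z q (n + 1) = qPoch (z * q) q n * (1 - z) := by
    rw [qPoch, Finset.prod_range_succ', qPoch]
    congr 1
    · apply Finset.prod_congr rfl
      intro i _
      rw [pow_succ]; ring
    · simp
  have hsplit2 : qPoch (z⁻¹ * q) q (n + 1)
      = qPoch (z⁻¹ * q) q n * (1 - q ^ (n + 1) * z⁻¹) := by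
    rw [qPoch, Finset.prod_range_succ, qPoch]
    congr 1
    rw [pow_succ]; ring
  rw [hsplit1, hsplit2]
  have h1z : (1 : ℂ) - z ≠ 0 := by
    intro h
    apply hzq 0
    have : z = 1 := by linear_combination -h
    simpa using this
  have h1w : (1 : ℂ) - q ^ (n + 1) * z⁻¹ ≠ 0 := by
    intro h
    have h2 := hw n
    rw [show q ^ (n + 1) * z⁻¹ = 1 by linear_combination -h] at h2
    norm_num at h2
  have hP1 : qPoch (z * q) q n ≠ 0 := by
    rw [qPoch]
    apply Finset.prod_ne_zero_iff.mpr
    intro i _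
    have e : (1 : ℂ) - z * q * q ^ i = 1 - z * q ^ (i + 1) := by rw [pow_succ]; ring
    rw [e]; exact ne1 (i + 1)
  have hP2 : qPoch (z⁻¹ * q) q n ≠ 0 := by
    rw [qPoch]
    apply Finset.prod_ne_zero_iff.mpr
    intro i _
    have e : (1 : ℂ) - z⁻¹ * q * q ^ i = 1 - z⁻¹ * q ^ (i + 1) := by rw [pow_succ]; ring
    rw [e]; exact ne2 (i + 1)
  show q ^ (n + 1) / (qPoch (z * q) q n * (1 - z) * (qPoch (z⁻¹ * q) q n * (1 - q ^ (n + 1) * z⁻¹)))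
      = z / (1 - z) * (q ^ (n + 1) * z⁻¹ / (1 - q ^ (n + 1) * z⁻¹) / P n)
  rw [hP]
  field_simp
end

section
/- Let q ∈ ℂ with 0 < |q| < 1, and let i denote the imaginary unit. Then 2 − Ũ₂(i, q) = 1/((iq;q)_∞ (−iq;q)_∞) = 1/(−q²; q²)_∞. -/
/-- The infinite q-Pochhammer symbol `(z;q)_∞ = ∏_{i=0}^{∞} (1 - z q^i)`. -/
noncomputable def qPochInf (z q : ℂ) : ℂ := ∏' i : ℕ, (1 - z * q ^ i)

open Filter Topology Finset

section Pochhammer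

variable {z q : ℂ}

lemma qPoch_succ (z q : ℂ) (n : ℕ) : qPoch z q (n + 1) = qPoch z q n * (1 - z * q ^ n) :=
  prod_range_succ _ n

lemma qPoch_mul_qPoch_neg (a q : ℂ) (n : ℕ) :
    qPoch a q n * qPoch (-a) q n = qPoch (a ^ 2) (q ^ 2) n := by
  simp only [qPoch, ← prod_mul_distrib]
  exact prod_congr rfl fun i _ => by ring

lemma one_sub_mul_pow_ne_zero (hz : ‖z‖ < 1) (hq : ‖q‖ ≤ 1) (i : ℕ) : 1 - z * q ^ i ≠ 0 := by
  refine sub_ne_zero.mpr fun h => ?_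
  have : ‖z * q ^ i‖ < 1 := by
    rw [norm_mul, norm_pow]
    exact mul_lt_one_of_nonneg_of_lt_one_left (norm_nonneg z) hz (pow_le_one₀ (norm_nonneg q) hq)
  simp [← h] at this

lemma qPoch_ne_zero (hz : ‖z‖ < 1) (hq : ‖q‖ ≤ 1) (n : ℕ) : qPoch z q n ≠ 0 :=
  prod_ne_zero_iff.mpr fun i _ => one_sub_mul_pow_ne_zero hz hq i

lemma summable_norm_neg_mul_pow (z : ℂ) (hq : ‖q‖ < 1) :
    Summable fun i : ℕ => ‖-(z * q ^ i)‖ := by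
  simpa [norm_mul, norm_pow] using
    (summable_geometric_of_lt_one (norm_nonneg q) hq).mul_left ‖z‖

lemma multipliable_one_sub_mul_pow (z : ℂ) (hq : ‖q‖ < 1) :
    Multipliable fun i : ℕ => 1 - z * q ^ i := by
  simpa [← sub_eq_add_neg] using multipliable_one_add_of_summable (summable_norm_neg_mul_pow z hq)

lemma tendsto_qPoch (z : ℂ) (hq : ‖q‖ < 1) :
    Tendsto (qPoch z q) atTop (𝓝 (qPochInf z q)) :=
  (multipliable_one_sub_mul_pow z hq).hasProd.tendsto_prod_nat

lemma qPochInf_ne_zero (hz : ‖z‖ < 1) (hq : ‖q‖ < 1) : qPochInf z q ≠ 0 := by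
  simpa [qPochInf, ← sub_eq_add_neg] using tprod_one_add_ne_zero_of_summable
    (fun i => by simpa [← sub_eq_add_neg] using one_sub_mul_pow_ne_zero hz hq.le i)
    (summable_norm_neg_mul_pow z hq)

lemma qPochInf_mul_qPochInf_neg (a : ℂ) (hq : ‖q‖ < 1) :
    qPochInf a q * qPochInf (-a) q = qPochInf (a ^ 2) (q ^ 2) := by
  have hq2 : ‖q ^ 2‖ < 1 := by simpa using pow_lt_one₀ (norm_nonneg q) hq two_ne_zero
  refine tendsto_nhds_unique ((tendsto_qPoch a hq).mul (tendsto_qPoch (-a) hq)) ?_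
  simpa only [qPoch_mul_qPoch_neg] using tendsto_qPoch (a ^ 2) hq2

end Pochhammer

section Telescoping

variable {t : ℂ}

lemma sum_range_succ_pow_div_qPoch_neg (hP : ∀ n, qPoch (-t) t n ≠ 0) (n : ℕ) :
    ∑ i ∈ range (n + 1), t ^ i / qPoch (-t) t i = 2 - (qPoch (-t) t n)⁻¹ := by
  induction n with
  | zero => norm_num [qPoch]
  | succ n ih =>
    have hsucc := hP (n + 1)
    rw [qPoch_succ, neg_mul, sub_neg_eq_add] at hsucc
    rw [sum_range_succ, ih, qPoch_succ, neg_mul, sub_neg_eq_add]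
    field_simp [hP n, right_ne_zero_of_mul hsucc]
    ring

lemma hasSum_pow_div_qPoch_neg (ht : ‖t‖ < 1) :
    HasSum (fun n => t ^ n / qPoch (-t) t n) (2 - (qPochInf (-t) t)⁻¹) := by
  have hP := qPoch_ne_zero (z := -t) (by simpa using ht) ht.le
  have hinv : Tendsto (fun n => (qPoch (-t) t n)⁻¹) atTop (𝓝 (qPochInf (-t) t)⁻¹) :=
    (tendsto_qPoch (-t) ht).inv₀ (qPochInf_ne_zero (by simpa using ht) ht)
  obtain ⟨C, hC⟩ := hinv.norm.bddAbove_range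
  have hsummable : Summable fun n => t ^ n / qPoch (-t) t n := by
    refine .of_norm_bounded ((summable_geometric_of_lt_one (norm_nonneg t) ht).mul_left C)
      fun n => ?_
    rw [div_eq_mul_inv, norm_mul, norm_pow, mul_comm]
    exact mul_le_mul_of_nonneg_right (hC (Set.mem_range_self n)) (by positivity)
  rw [hsummable.hasSum_iff_tendsto_nat, ← tendsto_add_atTop_iff_nat 1]
  simpa only [sum_range_succ_pow_div_qPoch_neg hP] using tendsto_const_nhds.sub hinv

end Telescoping

theorem tildeU_two_at_i_general (q : ℂ)
    (hq1 : ‖q‖ < 1) :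
    2 - tildeU 2 Complex.I q
        = (qPochInf (Complex.I * q) q * qPochInf (-Complex.I * q) q)⁻¹ ∧
    (qPochInf (Complex.I * q) q * qPochInf (-Complex.I * q) q)⁻¹
        = (qPochInf (-q ^ 2) (q ^ 2))⁻¹ := by
  have hIq_sq : (Complex.I * q) ^ 2 = -q ^ 2 := by rw [mul_pow, Complex.I_sq, neg_one_mul]
  have hprod : qPochInf (Complex.I * q) q * qPochInf (-Complex.I * q) q
      = qPochInf (-q ^ 2) (q ^ 2) := by
    rw [neg_mul, qPochInf_mul_qPochInf_neg _ hq1, hIq_sq]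
  have hU : tildeU 2 Complex.I q = ∑' n, (q ^ 2) ^ n / qPoch (-q ^ 2) (q ^ 2) n := by
    refine tsum_congr fun n => ?_
    rw [Complex.inv_I, neg_mul, qPoch_mul_qPoch_neg, hIq_sq, pow_mul]
  have hq2 : ‖q ^ 2‖ < 1 := by simpa using pow_lt_one₀ (norm_nonneg q) hq1 two_ne_zero
  refine ⟨?_, by rw [hprod]⟩
  rw [hU, (hasSum_pow_div_qPoch_neg hq2).tsum_eq, hprod]
  ring

/-- For `0 < |q| < 1`,
`2 − Ũ₂(i,q) = 1/((iq;q)_∞ (−iq;q)_∞) = 1/(−q²;q²)_∞`. -/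
theorem tildeU_two_at_i (q : ℂ)
    (hq0 : 0 < ‖q‖) (hq1 : ‖q‖ < 1) :
    2 - tildeU 2 Complex.I q
        = (qPochInf (Complex.I * q) q * qPochInf (-Complex.I * q) q)⁻¹ ∧
    (qPochInf (Complex.I * q) q * qPochInf (-Complex.I * q) q)⁻¹
        = (qPochInf (-q ^ 2) (q ^ 2))⁻¹ :=
  tildeU_two_at_i_general q hq1
end

section
/- Let q ∈ ℂ with 0 < |q| < 1, and let i denote the imaginary unit. Then Ũ₂(i,q) − 2 ≠ 0 and 1 + U₂(i,q) ≠ 0, and the pair of identities U₂(i,q) = (1 − Ũ₂(i,q))/(Ũ₂(i,q) − 2) and Ũ₂(i,q) = (1 + 2·U₂(i,q))/(1 + U₂(i,q)) hold. -/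
open Filter Finset


/-- The rank generating function
`U_k(z,q) = ∑_{n=0}^∞ q^{k(n+1)} (−zq;q)_n (−z⁻¹q;q)_n` for strongly unimodal
sequences with a k-fold peak. -/
noncomputable def strongU (k : ℕ) (z q : ℂ) : ℂ :=
  ∑' n : ℕ, q ^ (k * (n + 1)) * qPoch (-(z * q)) q n * qPoch (-(z⁻¹ * q)) q n


noncomputable def pp (Q : ℂ) (n : ℕ) : ℂ := ∏ i ∈ Finset.range n, (1 + Q ^ (i + 1))

lemma term_ne {Q : ℂ} (hQ : ‖Q‖ < 1) (i : ℕ) : (1 : ℂ) + Q ^ (i + 1) ≠ 0 := by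
  intro h
  have hw : Q ^ (i + 1) = -1 := by linear_combination h
  have : ‖Q ^ (i + 1)‖ < 1 := by
    rw [norm_pow]
    calc ‖Q‖ ^ (i + 1) ≤ ‖Q‖ ^ 1 :=
      pow_le_pow_of_le_one (norm_nonneg _) hQ.le (by omega)
    _ < 1 := by simpa using hQ
  rw [hw] at this
  simp at this

lemma pp_ne {Q : ℂ} (hQ : ‖Q‖ < 1) (n : ℕ) : pp Q n ≠ 0 :=
  Finset.prod_ne_zero_iff.2 fun i _ => term_ne hQ i

lemma pp_succ (Q : ℂ) (n : ℕ) : pp Q (n + 1) = pp Q n * (1 + Q ^ (n + 1)) :=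
  Finset.prod_range_succ _ n

lemma summable_log {Q : ℂ} (hQ : ‖Q‖ < 1) :
    Summable fun n : ℕ => Complex.log (1 + Q ^ (n + 1)) := by
  have hr0 : (0:ℝ) ≤ ‖Q‖ := norm_nonneg _
  set r := ‖Q‖ with hr
  have hgeom : Summable fun n : ℕ => (r * (1 - r)⁻¹ / 2 + 1) * (r * r ^ n) :=
    ((summable_geometric_of_lt_one hr0 hQ).mul_left r).mul_left _
  apply Summable.of_norm_bounded hgeom
  intro n
  have hwn : ‖Q ^ (n + 1)‖ = r ^ (n + 1) := by rw [norm_pow]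
  have hwlt : ‖Q ^ (n + 1)‖ < 1 := by
    rw [hwn]
    calc r ^ (n + 1) ≤ r ^ 1 := pow_le_pow_of_le_one hr0 hQ.le (by omega)
    _ < 1 := by simpa using hQ
  calc ‖Complex.log (1 + Q ^ (n + 1))‖
      ≤ ‖Q ^ (n+1)‖ ^ 2 * (1 - ‖Q ^ (n+1)‖)⁻¹ / 2 + ‖Q ^ (n+1)‖ :=
        Complex.norm_log_one_add_le hwlt
    _ ≤ r ^ (n+1) * r * (1 - r)⁻¹ / 2 + r ^ (n+1) := by
        rw [hwn]
        have hple : r ^ (n + 1) ≤ r := by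
          calc r ^ (n + 1) ≤ r ^ 1 := pow_le_pow_of_le_one hr0 hQ.le (by omega)
          _ = r := pow_one r
        have hsq : (r ^ (n+1))^2 ≤ r ^ (n+1) * r := by
          rw [sq]; gcongr
        have h1r : (0:ℝ) < 1 - r := by linarith
        have h1a : (1 - r ^ (n+1))⁻¹ ≤ (1 - r)⁻¹ := by
          apply inv_anti₀ h1r; linarith
        have key : (r ^ (n+1))^2 * (1 - r ^ (n+1))⁻¹ ≤ r ^ (n+1) * r * (1 - r)⁻¹ :=
          by
          have h1a0 : (0:ℝ) < 1 - r ^ (n+1) := by linarith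
          exact mul_le_mul hsq h1a (by positivity) (by positivity)
        linarith
    _ = (r * (1 - r)⁻¹ / 2 + 1) * (r * r ^ n) := by ring

lemma key {Q : ℂ} (hQ : ‖Q‖ < 1) :
    ∃ L : ℂ, L ≠ 0 ∧ (∑' n : ℕ, Q ^ (n + 1) * pp Q n) = L - 1 ∧
      (∑' n : ℕ, Q ^ n / pp Q n) = 2 - L⁻¹ := by
  have hs := summable_log hQ
  have hprod : HasProd (fun n : ℕ => 1 + Q ^ (n + 1))
      (Complex.exp (∑' n : ℕ, Complex.log (1 + Q ^ (n + 1)))) := by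
    have h := hs.hasSum.cexp
    rwa [show (Complex.exp ∘ fun n : ℕ => Complex.log (1 + Q ^ (n + 1)))
        = fun n : ℕ => 1 + Q ^ (n + 1) from
      funext fun n => Complex.exp_log (term_ne hQ n)] at h
  set L := Complex.exp (∑' n : ℕ, Complex.log (1 + Q ^ (n + 1))) with hL
  have hL0 : L ≠ 0 := Complex.exp_ne_zero _
  have hpt : Tendsto (fun n : ℕ => pp Q n) atTop (nhds L) := hprod.tendsto_prod_nat
  -- bound on pp
  obtain ⟨C, hC⟩ := (hpt.norm).bddAbove_range
  have hCb : ∀ n, ‖pp Q n‖ ≤ C := fun n => hC ⟨n, rfl⟩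
  -- inverse tendsto and bound
  have hinv : Tendsto (fun n : ℕ => (pp Q n)⁻¹) atTop (nhds L⁻¹) := hpt.inv₀ hL0
  obtain ⟨D, hD⟩ := (hinv.norm).bddAbove_range
  have hDb : ∀ n, ‖(pp Q n)⁻¹‖ ≤ D := fun n => hD ⟨n, rfl⟩
  have hr0 : (0:ℝ) ≤ ‖Q‖ := norm_nonneg _
  have hgeo : Summable fun n : ℕ => ‖Q‖ ^ n := summable_geometric_of_lt_one hr0 hQ
  -- summability of the two series
  have hsumB : Summable fun n : ℕ => Q ^ (n + 1) * pp Q n := by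
    apply Summable.of_norm_bounded (g := fun n : ℕ => (C * ‖Q‖) * ‖Q‖ ^ n) (hgeo.mul_left _)
    intro n
    rw [norm_mul, norm_pow, pow_succ]
    calc ‖Q‖ ^ n * ‖Q‖ * ‖pp Q n‖ ≤ ‖Q‖ ^ n * ‖Q‖ * C := by
          gcongr; exact hCb n
      _ = C * ‖Q‖ * ‖Q‖ ^ n := by ring
  have hsumA : Summable fun n : ℕ => Q ^ n / pp Q n := by
    apply Summable.of_norm_bounded (g := fun n : ℕ => D * ‖Q‖ ^ n) (hgeo.mul_left _)
    intro n
    rw [div_eq_mul_inv, norm_mul, norm_pow]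
    calc ‖Q‖ ^ n * ‖(pp Q n)⁻¹‖ ≤ ‖Q‖ ^ n * D := by gcongr; exact hDb n
      _ = D * ‖Q‖ ^ n := by ring
  -- partial sums
  have hparB : ∀ N : ℕ, ∑ n ∈ Finset.range N, Q ^ (n + 1) * pp Q n = pp Q N - 1 := by
    intro N
    induction N with
    | zero => simp [pp]
    | succ N ih =>
        rw [Finset.sum_range_succ, ih, pp_succ]
        ring
  have hparA : ∀ N : ℕ, ∑ n ∈ Finset.range (N + 1), Q ^ n / pp Q n
      = 2 - (pp Q N)⁻¹ := by
    intro N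
    induction N with
    | zero => simp [pp]; norm_num
    | succ N ih =>
        rw [Finset.sum_range_succ, ih, pp_succ]
        have h1 := pp_ne hQ N
        have h2 := term_ne hQ N
        field_simp
        ring
  refine ⟨L, hL0, ?_, ?_⟩
  · refine tendsto_nhds_unique hsumB.hasSum.tendsto_sum_nat ?_
    have : Tendsto (fun N : ℕ => pp Q N - 1) atTop (nhds (L - 1)) :=
      hpt.sub tendsto_const_nhds
    exact this.congr fun N => (hparB N).symm
  · refine tendsto_nhds_unique
      (hsumA.hasSum.tendsto_sum_nat.comp (tendsto_add_atTop_nat 1)) ?_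
    have : Tendsto (fun N : ℕ => 2 - (pp Q N)⁻¹) atTop (nhds (2 - L⁻¹)) :=
      tendsto_const_nhds.sub hinv
    exact this.congr fun N => (hparA N).symm

/-- For `0 < |q| < 1`: `Ũ₂(i,q) − 2 ≠ 0`, `1 + U₂(i,q) ≠ 0`, and
`U₂(i,q) = (1 − Ũ₂(i,q))/(Ũ₂(i,q) − 2)`, `Ũ₂(i,q) = (1 + 2U₂(i,q))/(1 + U₂(i,q))`. -/
theorem strongU_tildeU_relations (q : ℂ)
    (hq0 : 0 < ‖q‖) (hq1 : ‖q‖ < 1) :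
    tildeU 2 Complex.I q - 2 ≠ 0 ∧ 1 + strongU 2 Complex.I q ≠ 0 ∧
    strongU 2 Complex.I q
        = (1 - tildeU 2 Complex.I q) / (tildeU 2 Complex.I q - 2) ∧
    tildeU 2 Complex.I q
        = (1 + 2 * strongU 2 Complex.I q) / (1 + strongU 2 Complex.I q) := by
  have hq1' : ‖q‖ < 1 := hq1
  have hQ : ‖q ^ 2‖ < 1 := by
    rw [norm_pow]
    calc ‖q‖ ^ 2 ≤ ‖q‖ ^ 1 := pow_le_pow_of_le_one (norm_nonneg _) hq1'.le (by omega)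
      _ < 1 := by simpa using hq1'
  have hII : (Complex.I)⁻¹ = -Complex.I := Complex.inv_I
  have hpoch : ∀ n : ℕ, qPoch (Complex.I * q) q n * qPoch ((Complex.I)⁻¹ * q) q n
      = pp (q ^ 2) n := by
    intro n
    unfold qPoch pp
    rw [← Finset.prod_mul_distrib]
    refine Finset.prod_congr rfl fun i _ => ?_
    rw [hII]
    linear_combination (-(q ^ 2 * q ^ (2 * i))) * Complex.I_sq
  have hpoch' : ∀ n : ℕ, qPoch (-(Complex.I * q)) q n * qPoch (-((Complex.I)⁻¹ * q)) q n
      = pp (q ^ 2) n := by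
    intro n
    unfold qPoch pp
    rw [← Finset.prod_mul_distrib]
    refine Finset.prod_congr rfl fun i _ => ?_
    rw [hII]
    linear_combination (-(q ^ 2 * q ^ (2 * i))) * Complex.I_sq
  have hT : tildeU 2 Complex.I q = ∑' n : ℕ, (q ^ 2) ^ n / pp (q ^ 2) n := by
    unfold tildeU
    refine tsum_congr fun n => ?_
    rw [hpoch n, ← pow_mul]
  have hS : strongU 2 Complex.I q = ∑' n : ℕ, (q ^ 2) ^ (n + 1) * pp (q ^ 2) n := by
    unfold strongU
    refine tsum_congr fun n => ?_
    rw [mul_assoc, hpoch' n, ← pow_mul]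
  obtain ⟨L, hL0, hB, hA⟩ := key hQ
  rw [hT, hS, hA, hB]
  have hLi : L⁻¹ ≠ 0 := inv_ne_zero hL0
  refine ⟨?_, ?_, ?_, ?_⟩
  · intro h; exact hLi (by linear_combination -h)
  · intro h; exact hL0 (by linear_combination h)
  · field_simp
    ring
  · field_simp
    have := mul_inv_cancel₀ hL0
    linear_combination (1 - 2 * L) * this
end

section
/- Let m and k be positive integers, ζ_m := e^{2πi/m}, and let z ∈ ℂ with z ≠ 0 and |2 − z^m − z^{-m}| < 1 (so in particular z^m + z^{-m} ≠ 1). Then the series U_k(−z, ζ_m) = ∑_{n=0}^∞ ζ_m^{k(n+1)} (zζ_m; ζ_m)_n (z⁻¹ζ_m; ζ_m)_n converges and is given by the finite formula U_k(−z, ζ_m) = (−1/(1 − z^m − z^{-m})) · ∑_{n=0}^{m-1} ζ_m^{k(n+1)} (zζ_m; ζ_m)_n (z⁻¹ζ_m; ζ_m)_n. -/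
open Finset

section QuasiPeriodic

variable {R M : Type*} [Semiring R] [AddCommMonoid M] [Module R M] {a : ℕ → M} {c : R} {m : ℕ}

lemma apply_mul_add_eq_pow_smul (ha : ∀ n, a (n + m) = c • a n) (q r : ℕ) :
    a (q * m + r) = c ^ q • a r := by
  induction q with
  | zero => simp
  | succ q ih => rw [add_mul, one_mul, add_right_comm, ha, ih, pow_succ', mul_smul]

variable [TopologicalSpace R] [TopologicalSpace M] [ContinuousSMul R M] {s : R}

lemma hasSum_ite_mod_eq_of_add_eq_smul (hm : 0 < m) (ha : ∀ n, a (n + m) = c • a n)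
    (hc : HasSum (c ^ ·) s) {r : ℕ} (hr : r < m) :
    HasSum (fun n ↦ if n % m = r then a n else 0) (s • a r) := by
  have hinj : Function.Injective (· * m + r) := fun p q h ↦
    Nat.eq_of_mul_eq_mul_right hm (Nat.add_right_cancel h)
  rw [← hinj.hasSum_iff]
  · convert hc.smul_const (a r) using 2 with q
    simp [Nat.mul_add_mod_of_lt hr, apply_mul_add_eq_pow_smul ha]
  · intro n hn
    rw [if_neg]
    rintro rfl
    exact hn ⟨n / m, Nat.div_add_mod' n m⟩

variable [ContinuousAdd M]

theorem hasSum_of_add_eq_smul (hm : 0 < m) (ha : ∀ n, a (n + m) = c • a n)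
    (hc : HasSum (c ^ ·) s) : HasSum a (s • ∑ n ∈ range m, a n) := by
  rw [smul_sum]
  convert hasSum_sum fun r hr ↦ hasSum_ite_mod_eq_of_add_eq_smul hm ha hc (mem_range.1 hr) with n
  rw [sum_ite_eq, if_pos (mem_range.2 (Nat.mod_lt n hm))]

end QuasiPeriodic

theorem IsPrimitiveRoot.prod_one_sub_mul_pow {R : Type*} [CommRing R] [IsDomain R] {ζ : R}
    {m : ℕ} (h : IsPrimitiveRoot ζ m) (hm : 0 < m) (x : R) :
    ∏ i ∈ range m, (1 - x * ζ ^ i) = 1 - x ^ m := by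
  have := congrArg (Polynomial.eval 1) (X_pow_sub_C_eq_prod h hm (α := x) rfl)
  simpa [Polynomial.eval_prod, mul_comm] using this.symm

lemma qPoch_add_of_isPrimitiveRoot {ζ : ℂ} {m : ℕ} (h : IsPrimitiveRoot ζ m) (hm : 0 < m)
    (w : ℂ) (n : ℕ) : qPoch w ζ (n + m) = qPoch w ζ n * (1 - w ^ m) := by
  have hshift : ∏ i ∈ range m, (1 - w * ζ ^ (n + i)) = 1 - w ^ m := by
    simp_rw [pow_add, ← mul_assoc]
    rw [h.prod_one_sub_mul_pow hm, mul_pow, ← pow_mul, mul_comm n, pow_mul, h.pow_eq_one,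
      one_pow, mul_one]
  rw [qPoch, prod_range_add, ← qPoch, hshift]

lemma pow_mul_qPoch_mul_qPoch_add_of_isPrimitiveRoot {ζ : ℂ} {m : ℕ} (h : IsPrimitiveRoot ζ m)
    (hm : 0 < m) (k : ℕ) (x y : ℂ) (n : ℕ) :
    ζ ^ (k * (n + m + 1)) * qPoch x ζ (n + m) * qPoch y ζ (n + m) =
      ((1 - x ^ m) * (1 - y ^ m)) * (ζ ^ (k * (n + 1)) * qPoch x ζ n * qPoch y ζ n) := by
  have hζk : ζ ^ (k * (n + m + 1)) = ζ ^ (k * (n + 1)) := by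
    rw [show k * (n + m + 1) = k * (n + 1) + m * k by ring, pow_add, pow_mul ζ m, h.pow_eq_one,
      one_pow, mul_one]
  rw [hζk, qPoch_add_of_isPrimitiveRoot h hm, qPoch_add_of_isPrimitiveRoot h hm]
  ring

theorem strongU_finite_formula_at_root_of_unity_general (m k : ℕ) (hm : 0 < m)
    (ζ : ℂ) (hζ : ζ = Complex.exp (2 * Real.pi * Complex.I / m))
    (z : ℂ) (hz0 : z ≠ 0)
    (hlt : ‖2 - z ^ m - z⁻¹ ^ m‖ < 1) :
    Summable (fun n : ℕ =>
      ζ ^ (k * (n + 1)) * qPoch (z * ζ) ζ n * qPoch (z⁻¹ * ζ) ζ n) ∧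
    (∑' n : ℕ, ζ ^ (k * (n + 1)) * qPoch (z * ζ) ζ n * qPoch (z⁻¹ * ζ) ζ n)
      = (-(1 - z ^ m - z⁻¹ ^ m)⁻¹) *
          ∑ n ∈ Finset.range m, ζ ^ (k * (n + 1)) * qPoch (z * ζ) ζ n * qPoch (z⁻¹ * ζ) ζ n := by
  have hprim : IsPrimitiveRoot ζ m := hζ ▸ Complex.isPrimitiveRoot_exp m hm.ne'
  have hmult : (1 - (z * ζ) ^ m) * (1 - (z⁻¹ * ζ) ^ m) = 2 - z ^ m - z⁻¹ ^ m := by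
    rw [mul_pow, mul_pow, hprim.pow_eq_one, mul_one, mul_one, inv_pow]
    field_simp
    ring
  set a : ℕ → ℂ := fun n ↦ ζ ^ (k * (n + 1)) * qPoch (z * ζ) ζ n * qPoch (z⁻¹ * ζ) ζ n
  have hper (n : ℕ) : a (n + m) = (2 - z ^ m - z⁻¹ ^ m) • a n := by
    rw [← hmult, smul_eq_mul]
    exact pow_mul_qPoch_mul_qPoch_add_of_isPrimitiveRoot hprim hm k _ _ n
  have hsum := hasSum_of_add_eq_smul hm hper (hasSum_geometric_of_norm_lt_one hlt)
  refine ⟨hsum.summable, hsum.tsum_eq.trans ?_⟩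
  rw [smul_eq_mul, ← inv_neg]
  congr 2
  ring

/-- Let `ζ_m = e^{2πi/m}`, `z ≠ 0`, and `|2 − z^m − z^{-m}| < 1`.
Then the series `U_k(−z,ζ_m) = ∑_{n=0}^∞ ζ_m^{k(n+1)} (zζ_m;ζ_m)_n (z⁻¹ζ_m;ζ_m)_n`
converges and
`U_k(−z,ζ_m) = (−1/(1 − z^m − z^{-m})) ∑_{n=0}^{m-1} ζ_m^{k(n+1)} (zζ_m;ζ_m)_n (z⁻¹ζ_m;ζ_m)_n`. -/
theorem strongU_finite_formula_at_root_of_unity (m k : ℕ) (hm : 0 < m) (hk : 0 < k)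
    (ζ : ℂ) (hζ : ζ = Complex.exp (2 * Real.pi * Complex.I / m))
    (z : ℂ) (hz0 : z ≠ 0)
    (hlt : ‖2 - z ^ m - z⁻¹ ^ m‖ < 1) :
    Summable (fun n : ℕ =>
      ζ ^ (k * (n + 1)) * qPoch (z * ζ) ζ n * qPoch (z⁻¹ * ζ) ζ n) ∧
    (∑' n : ℕ, ζ ^ (k * (n + 1)) * qPoch (z * ζ) ζ n * qPoch (z⁻¹ * ζ) ζ n)
      = (-(1 - z ^ m - z⁻¹ ^ m)⁻¹) *
          ∑ n ∈ Finset.range m, ζ ^ (k * (n + 1)) * qPoch (z * ζ) ζ n * qPoch (z⁻¹ * ζ) ζ n :=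
  strongU_finite_formula_at_root_of_unity_general m k hm ζ hζ z hz0 hlt
end
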